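/- (Forward-backward splitting, strongly monotone case.) Let η ∈ ℝⁿ be a positive vector. Let F : ℝⁿ → ℝⁿ be continuously differentiable with μ_{∞,η⁻¹}(−DF(x)) ≤ −c for all x ∈ ℝⁿ, where c > 0, and let d > 0 be a diagonal bound for F. Let G : ℝⁿ → ℝⁿ be continuously differentiable with μ_{∞,η⁻¹}(−DG(x)) ≤ 0 for all x ∈ ℝⁿ. Then F + G has at most one zero; and if x* satisfies F(x*) + G(x*) = 0, then for every α ∈ (0, 1/d], any sequence satisfying x_{k+1} + αG(x_{k+1}) = x_k − αF(x_k) for all k satisfies ‖x_{k+1} − x*‖_{∞,η⁻¹} ≤ (1 − αc) ‖x_k − x*‖_{∞,η⁻¹}; consequently x_k → x*. -/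

import Mathlib

open Filter

/-- Diagonally weighted ℓ∞ norm: ‖x‖_{∞,η⁻¹} = max_i |x_i|/η_i. -/
noncomputable def wNorm {n : ℕ} (η x : Fin n → ℝ) : ℝ := ⨆ i, |x i| / η i

/-- Diagonally weighted ℓ∞ logarithmic norm of a matrix. -/
noncomputable def logNorm {n : ℕ} (η : Fin n → ℝ) (A : Matrix (Fin n) (Fin n) ℝ) : ℝ :=
  ⨆ i, (A i i + ∑ j ∈ Finset.univ.erase i, (η j / η i) * |A i j|)

/-- Jacobian matrix of `F` at `x`: (DF(x))_{ij} = ∂F_i/∂x_j. -/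
noncomputable def jac {n : ℕ} (F : (Fin n → ℝ) → (Fin n → ℝ)) (x : Fin n → ℝ) :
    Matrix (Fin n) (Fin n) ℝ :=
  fun i j => fderiv ℝ F x (Pi.single j 1) i

/-!
Componentwise, the mean value theorem writes `Φ u i - Φ v i` as the `i`-th row of the Jacobian
of `Φ` at some intermediate point applied to `u - v`. The row estimates hidden in `logNorm` then
show that the forward step `x ↦ x - α F x` is a `(1 - α c)`-contraction for `‖·‖_{∞,η⁻¹}` once
`α d ≤ 1` (the diagonal bound keeps `1 - α ∂ᵢFᵢ ≥ 0`), while `x ↦ x + α G x` never shrinks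
distances (test it at a coordinate where `|zᵢ|/ηᵢ` is maximal). Composing the two gives the
contraction of the iteration towards `x*`.
-/

open Finset Matrix

section WeightedNorm

variable {n : ℕ} {η : Fin n → ℝ}

lemma wNorm_nonneg (hη : ∀ i, 0 < η i) (z : Fin n → ℝ) : 0 ≤ wNorm η z :=
  Real.iSup_nonneg fun i => div_nonneg (abs_nonneg _) (hη i).le

lemma div_le_wNorm (z : Fin n → ℝ) (i : Fin n) : |z i| / η i ≤ wNorm η z :=
  le_ciSup (f := fun i => |z i| / η i) (Set.finite_range _).bddAbove i

lemma abs_le_mul_wNorm (hη : ∀ i, 0 < η i) (z : Fin n → ℝ) (i : Fin n) :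
    |z i| ≤ η i * wNorm η z := by
  rw [mul_comm, ← div_le_iff₀ (hη i)]
  exact div_le_wNorm z i

lemma wNorm_le_mul_wNorm {w z : Fin n → ℝ} {r : ℝ} (h : ∀ i, |w i| / η i ≤ r * wNorm η z) :
    wNorm η w ≤ r * wNorm η z := by
  rcases isEmpty_or_nonempty (Fin n) with _ | _
  · simp [wNorm]
  · exact ciSup_le h

lemma tendsto_of_tendsto_wNorm_sub (hη : ∀ i, 0 < η i) {x : ℕ → Fin n → ℝ} {y : Fin n → ℝ}
    (h : Tendsto (fun k => wNorm η (x k - y)) atTop (nhds 0)) : Tendsto x atTop (nhds y) := by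
  refine tendsto_pi_nhds.2 fun i => tendsto_iff_dist_tendsto_zero.2 ?_
  refine squeeze_zero (fun k => dist_nonneg) (fun k => ?_) (by simpa using h.const_mul (η i))
  simpa [Real.dist_eq] using abs_le_mul_wNorm hη (x k - y) i

end WeightedNorm

section RowEstimates

variable {n : ℕ} (η : Fin n → ℝ) (A : Matrix (Fin n) (Fin n) ℝ)

noncomputable def offDiagRowSum (i : Fin n) : ℝ :=
  ∑ j ∈ univ.erase i, (η j / η i) * |A i j|

variable {η A}

lemma neg_diag_add_offDiagRowSum_le_logNorm_neg (i : Fin n) :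
    -A i i + offDiagRowSum η A i ≤ logNorm η (-A) := by
  refine le_of_eq_of_le ?_ (le_ciSup (f := fun i => (-A) i i +
    ∑ j ∈ univ.erase i, (η j / η i) * |(-A) i j|) (Set.finite_range _).bddAbove i)
  simp [offDiagRowSum]

lemma offDiagRowSum_nonneg (hη : ∀ i, 0 < η i) (i : Fin n) : 0 ≤ offDiagRowSum η A i :=
  sum_nonneg fun j _ => mul_nonneg (div_nonneg (hη j).le (hη i).le) (abs_nonneg _)

lemma mulVec_apply_eq_diag_add (z : Fin n → ℝ) (i : Fin n) :
    (A *ᵥ z) i = A i i * z i + ∑ j ∈ univ.erase i, A i j * z j :=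
  (add_sum_erase _ _ (mem_univ i)).symm

lemma abs_offDiag_mulVec_le (hη : ∀ i, 0 < η i) {z : Fin n → ℝ} {M : ℝ}
    (hz : ∀ j, |z j| ≤ η j * M) (i : Fin n) :
    |∑ j ∈ univ.erase i, A i j * z j| ≤ offDiagRowSum η A i * (η i * M) := by
  rw [offDiagRowSum, sum_mul]
  refine (abs_sum_le_sum_abs _ _).trans (sum_le_sum fun j _ => ?_)
  calc |A i j * z j| ≤ |A i j| * (η j * M) := by
        rw [abs_mul]; exact mul_le_mul_of_nonneg_left (hz j) (abs_nonneg _)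
    _ = η j / η i * |A i j| * (η i * M) := by field_simp [(hη i).ne']

lemma abs_sub_smul_mulVec_apply_le (hη : ∀ i, 0 < η i) {z : Fin n → ℝ} {M α c : ℝ}
    (hz : ∀ j, |z j| ≤ η j * M) (i : Fin n) (hα : 0 ≤ α) (hdiag : α * A i i ≤ 1)
    (hrow : -A i i + offDiagRowSum η A i ≤ -c) :
    |z i - α * (A *ᵥ z) i| ≤ (1 - α * c) * (η i * M) := by
  have hM : 0 ≤ η i * M := (abs_nonneg _).trans (hz i)
  have hdiag' : 0 ≤ 1 - α * A i i := sub_nonneg.2 hdiag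
  calc |z i - α * (A *ᵥ z) i|
      = |(1 - α * A i i) * z i - α * ∑ j ∈ univ.erase i, A i j * z j| := by
        rw [mulVec_apply_eq_diag_add]; ring_nf
    _ ≤ (1 - α * A i i) * |z i| + α * |∑ j ∈ univ.erase i, A i j * z j| := by
        refine (abs_sub _ _).trans_eq ?_
        rw [abs_mul, abs_mul, abs_of_nonneg hdiag', abs_of_nonneg hα]
    _ ≤ (1 - α * A i i) * (η i * M) + α * (offDiagRowSum η A i * (η i * M)) := by
        gcongr
        exacts [hz i, abs_offDiag_mulVec_le hη hz i]
    _ ≤ (1 - α * c) * (η i * M) := by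
        nlinarith [mul_le_mul_of_nonneg_left hrow (mul_nonneg hα hM)]

lemma abs_le_abs_add_smul_mulVec_apply (hη : ∀ i, 0 < η i) {z : Fin n → ℝ} {α : ℝ} {i : Fin n}
    (hmax : ∀ j, |z j| / η j ≤ |z i| / η i) (hα : 0 ≤ α)
    (hrow : -A i i + offDiagRowSum η A i ≤ 0) :
    |z i| ≤ |z i + α * (A *ᵥ z) i| := by
  have hz : ∀ j, |z j| ≤ η j * (|z i| / η i) := fun j => by
    rw [mul_comm, ← div_le_iff₀ (hη j)]; exact hmax j
  have hoff := abs_offDiag_mulVec_le (A := A) hη hz i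
  rw [mul_div_cancel₀ _ (hη i).ne'] at hoff
  have hdiag : 0 ≤ 1 + α * A i i := by
    nlinarith [offDiagRowSum_nonneg (A := A) hη i]
  calc |z i| ≤ (1 + α * A i i) * |z i| - α * (offDiagRowSum η A i * |z i|) := by
        nlinarith [mul_le_mul_of_nonneg_left hrow (mul_nonneg hα (abs_nonneg (z i)))]
    _ ≤ |(1 + α * A i i) * z i| - |α * ∑ j ∈ univ.erase i, A i j * z j| := by
        rw [abs_mul, abs_mul, abs_of_nonneg hdiag, abs_of_nonneg hα]
        gcongr
    _ ≤ |(1 + α * A i i) * z i + α * ∑ j ∈ univ.erase i, A i j * z j| := abs_sub_abs_le_abs_add _ _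
    _ = |z i + α * (A *ᵥ z) i| := by rw [mulVec_apply_eq_diag_add]; ring_nf

end RowEstimates

lemma jac_mulVec {n : ℕ} (Φ : (Fin n → ℝ) → (Fin n → ℝ)) (x z : Fin n → ℝ) :
    jac Φ x *ᵥ z = fderiv ℝ Φ x z := by
  have : jac Φ x = LinearMap.toMatrix' (fderiv ℝ Φ x : (Fin n → ℝ) →ₗ[ℝ] (Fin n → ℝ)) := by
    ext i j; simp [jac, LinearMap.toMatrix'_apply]
  rw [this, LinearMap.toMatrix'_mulVec]
  rfl

lemma exists_sub_apply_eq_jac_mulVec {n : ℕ} {Φ : (Fin n → ℝ) → (Fin n → ℝ)}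
    (hΦ : Differentiable ℝ Φ) (u v : Fin n → ℝ) (i : Fin n) :
    ∃ ξ, Φ u i - Φ v i = (jac Φ ξ *ᵥ (u - v)) i := by
  have hderiv : ∀ t : ℝ, HasDerivAt (fun t : ℝ => Φ (v + t • (u - v)) i)
      (fderiv ℝ Φ (v + t • (u - v)) (u - v) i) t := fun t => by
    have hline : HasDerivAt (fun t : ℝ => v + t • (u - v)) (u - v) t := by
      simpa using ((hasDerivAt_id t).smul_const (u - v)).const_add v
    exact hasDerivAt_pi.1 ((hΦ _).hasFDerivAt.comp_hasDerivAt t hline) i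
  obtain ⟨t, -, ht⟩ := exists_hasDerivAt_eq_slope _ _ zero_lt_one
    (fun t _ => (hderiv t).continuousAt.continuousWithinAt) (fun t _ => hderiv t)
  exact ⟨v + t • (u - v), by simpa [jac_mulVec] using ht.symm⟩

lemma add_smul_eq_sub_smul_of_add_eq_zero {E : Type*} [AddCommGroup E] [Module ℝ E]
    {a b x : E} (h : a + b = 0) (α : ℝ) : x + α • b = x - α • a := by
  rw [eq_neg_of_add_eq_zero_right h, smul_neg, sub_eq_add_neg]

lemma tendsto_zero_of_le_mul {a : ℕ → ℝ} {r : ℝ} (ha : ∀ k, 0 ≤ a k) (hr : r < 1)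
    (h : ∀ k, a (k + 1) ≤ r * a k) : Tendsto a atTop (nhds 0) := by
  have hgeom : ∀ k, a k ≤ max r 0 ^ k * a 0 := fun k =>
    le_geom (le_max_right r 0) k fun j _ =>
      (h j).trans (mul_le_mul_of_nonneg_right (le_max_left r 0) (ha j))
  refine squeeze_zero ha hgeom ?_
  simpa using (tendsto_pow_atTop_nhds_zero_of_lt_one (le_max_right r 0)
    (max_lt hr zero_lt_one)).mul_const (a 0)

section ForwardBackward

variable {n : ℕ} {η : Fin n → ℝ}

lemma wNorm_sub_smul_sub_le {F : (Fin n → ℝ) → (Fin n → ℝ)} (hF : Differentiable ℝ F)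
    {c d α : ℝ} (hmonoF : ∀ x, logNorm η (-(jac F x)) ≤ -c) (hdiag : ∀ x i, jac F x i i ≤ d)
    (hη : ∀ i, 0 < η i) (hα : 0 ≤ α) (hαd : α * d ≤ 1) (u v : Fin n → ℝ) :
    wNorm η ((u - α • F u) - (v - α • F v)) ≤ (1 - α * c) * wNorm η (u - v) := by
  refine wNorm_le_mul_wNorm fun i => ?_
  obtain ⟨ξ, hξ⟩ := exists_sub_apply_eq_jac_mulVec hF u v i
  have hcomp : ((u - α • F u) - (v - α • F v)) i = (u - v) i - α * (jac F ξ *ᵥ (u - v)) i := by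
    rw [← hξ]; simp only [Pi.sub_apply, Pi.smul_apply, smul_eq_mul]; ring
  rw [hcomp, div_le_iff₀ (hη i)]
  refine (abs_sub_smul_mulVec_apply_le hη (abs_le_mul_wNorm hη _) i hα
    ((mul_le_mul_of_nonneg_left (hdiag ξ i) hα).trans hαd)
    ((neg_diag_add_offDiagRowSum_le_logNorm_neg i).trans (hmonoF ξ))).trans_eq ?_
  ring

lemma wNorm_sub_le_wNorm_add_smul_sub {G : (Fin n → ℝ) → (Fin n → ℝ)} (hG : Differentiable ℝ G)
    (hmonoG : ∀ x, logNorm η (-(jac G x)) ≤ 0) (hη : ∀ i, 0 < η i) {α : ℝ} (hα : 0 ≤ α)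
    (u v : Fin n → ℝ) :
    wNorm η (u - v) ≤ wNorm η ((u + α • G u) - (v + α • G v)) := by
  rcases isEmpty_or_nonempty (Fin n) with _ | _
  · simp [wNorm]
  obtain ⟨i, hmax⟩ := Finite.exists_max fun j => |(u - v) j| / η j
  obtain ⟨ξ, hξ⟩ := exists_sub_apply_eq_jac_mulVec hG u v i
  have hcomp : ((u + α • G u) - (v + α • G v)) i = (u - v) i + α * (jac G ξ *ᵥ (u - v)) i := by
    rw [← hξ]; simp only [Pi.sub_apply, Pi.add_apply, Pi.smul_apply, smul_eq_mul]; ring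
  calc wNorm η (u - v) ≤ |(u - v) i| / η i := ciSup_le hmax
    _ ≤ |((u + α • G u) - (v + α • G v)) i| / η i := by
        rw [hcomp]
        refine div_le_div_of_nonneg_right ?_ (hη i).le
        exact abs_le_abs_add_smul_mulVec_apply hη hmax hα
          ((neg_diag_add_offDiagRowSum_le_logNorm_neg i).trans (hmonoG ξ))
    _ ≤ _ := div_le_wNorm _ i

lemma wNorm_sub_le_and_tendsto_of_forwardBackward {F G : (Fin n → ℝ) → (Fin n → ℝ)}
    (hF : Differentiable ℝ F) (hG : Differentiable ℝ G) {c d α : ℝ} (hc : 0 < c) (hd : 0 < d)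
    (hmonoF : ∀ x, logNorm η (-(jac F x)) ≤ -c) (hdiag : ∀ x i, jac F x i i ≤ d)
    (hmonoG : ∀ x, logNorm η (-(jac G x)) ≤ 0) (hη : ∀ i, 0 < η i)
    (hα : α ∈ Set.Ioc (0 : ℝ) (1 / d)) {xs : Fin n → ℝ} (hxs : F xs + G xs = 0)
    {x : ℕ → (Fin n → ℝ)} (hx : ∀ k, x (k + 1) + α • G (x (k + 1)) = x k - α • F (x k)) :
    (∀ k, wNorm η (x (k + 1) - xs) ≤ (1 - α * c) * wNorm η (x k - xs)) ∧
      Tendsto x atTop (nhds xs) := by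
  obtain ⟨hα, hαd⟩ := hα
  rw [le_div_iff₀ hd] at hαd
  have step : ∀ k, wNorm η (x (k + 1) - xs) ≤ (1 - α * c) * wNorm η (x k - xs) := fun k =>
    calc wNorm η (x (k + 1) - xs)
        ≤ wNorm η ((x (k + 1) + α • G (x (k + 1))) - (xs + α • G xs)) :=
          wNorm_sub_le_wNorm_add_smul_sub hG hmonoG hη hα.le _ _
      _ = wNorm η ((x k - α • F (x k)) - (xs - α • F xs)) := by
          rw [hx k, add_smul_eq_sub_smul_of_add_eq_zero hxs]
      _ ≤ (1 - α * c) * wNorm η (x k - xs) :=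
          wNorm_sub_smul_sub_le hF hmonoF hdiag hη hα.le hαd _ _
  exact ⟨step, tendsto_of_tendsto_wNorm_sub hη <|
    tendsto_zero_of_le_mul (fun k => wNorm_nonneg hη _) (by nlinarith) step⟩

end ForwardBackward

/-- Forward-backward splitting: strongly monotone case. -/
theorem stmt_12 {n : ℕ} (η : Fin n → ℝ) (hη : ∀ i, 0 < η i)
    (F : (Fin n → ℝ) → (Fin n → ℝ)) (hF : ContDiff ℝ 1 F)
    (c : ℝ) (hc : 0 < c) (hmonoF : ∀ x, logNorm η (-(jac F x)) ≤ -c)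
    (d : ℝ) (hd : 0 < d) (hdiag : ∀ x i, jac F x i i ≤ d)
    (G : (Fin n → ℝ) → (Fin n → ℝ)) (hG : ContDiff ℝ 1 G)
    (hmonoG : ∀ x, logNorm η (-(jac G x)) ≤ 0) :
    (∀ x y : Fin n → ℝ, F x + G x = 0 → F y + G y = 0 → x = y) ∧
    (∀ xs : Fin n → ℝ, F xs + G xs = 0 →
      ∀ α ∈ Set.Ioc (0 : ℝ) (1 / d), ∀ x : ℕ → (Fin n → ℝ),
        (∀ k, x (k + 1) + α • G (x (k + 1)) = x k - α • F (x k)) →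
        (∀ k, wNorm η (x (k + 1) - xs) ≤ (1 - α * c) * wNorm η (x k - xs)) ∧
        Tendsto x atTop (nhds xs)) := by
  have hF' := hF.differentiable one_ne_zero
  have hG' := hG.differentiable one_ne_zero
  refine ⟨fun x y hx hy => ?_, fun xs hxs α hα x hx =>
    wNorm_sub_le_and_tendsto_of_forwardBackward hF' hG' hc hd hmonoF hdiag hmonoG hη hα hxs hx⟩
  -- The constant sequence at a zero `x` is a forward-backward iteration, so it converges to `y`.
  exact tendsto_nhds_unique tendsto_const_nhds (wNorm_sub_le_and_tendsto_of_forwardBackward hF' hG'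
    hc hd hmonoF hdiag hmonoG hη ⟨by positivity, le_rfl⟩ hy
    (x := fun _ => x) fun _ => add_smul_eq_sub_smul_of_add_eq_zero hx _).2
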